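/- arXiv:1403.1960 — 7 statements merged into one kernel-verified Lean document; each statement's English description precedes it below -/
import Mathlib

section
/- Let A be a 2×2 complex matrix whose eigenvalues both lie in the closed unit disc. Then the operator norm of A is strictly less than 1 if and only if det(I - A*A) > 0. -/
/-!
Let e₀, e₁ ≥ 0 be the eigenvalues of A*A. Then ‖A‖² = ‖A*A‖ = max eᵢ and
det(I - A*A) = (1 - e₀)(1 - e₁), while e₀e₁ = det(A*A) = |det A|² ≤ 1 since det A is the product
of the eigenvalues of A. Two reals a, b with ab ≤ 1 are both below 1 exactly when
(1 - a)(1 - b) > 0, as they cannot both exceed 1.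
-/

open ComplexOrder Matrix

/-- The operator norm of a 2×2 complex matrix acting on Euclidean ℂ². -/
noncomputable def opNorm (A : Matrix (Fin 2) (Fin 2) ℂ) : ℝ :=
  ‖Matrix.toEuclideanCLM (𝕜 := ℂ) A‖

open scoped Matrix.Norms.L2Operator

namespace Matrix

variable {n : Type*} [Fintype n] [DecidableEq n]

theorem norm_det_le_pow_of_forall_mem_spectrum {K : Type*} [NormedField K] [IsAlgClosed K]
    {A : Matrix n n K} {r : ℝ} (h : ∀ z ∈ spectrum K A, ‖z‖ ≤ r) :
    ‖A.det‖ ≤ r ^ Fintype.card n := by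
  rw [det_eq_prod_roots_charpoly, ← charpoly_natDegree_eq_dim A,
    ← IsAlgClosed.card_roots_eq_natDegree, show ‖_‖ = _ from map_multiset_prod (normHom : K →*₀ ℝ) A.charpoly.roots]
  refine Multiset.prod_map_le_pow_card (fun z _ ↦ norm_nonneg z) fun z hz ↦ h z ?_
  exact mem_spectrum_of_isRoot_charpoly (Polynomial.isRoot_of_mem_roots hz)

variable {𝕜 : Type*} [RCLike 𝕜]

theorem prod_eigenvalues_conjTranspose_mul_self (A : Matrix n n 𝕜) :
    ∏ i, (isHermitian_conjTranspose_mul_self A).eigenvalues i = ‖A.det‖ ^ 2 := by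
  apply RCLike.ofReal_injective (K := 𝕜)
  rw [RCLike.ofReal_prod, ← IsHermitian.det_eq_prod_eigenvalues, det_mul, det_conjTranspose,
    RCLike.star_def, RCLike.conj_mul, RCLike.ofReal_pow]

namespace IsHermitian

variable {A : Matrix n n 𝕜} (hA : A.IsHermitian)
include hA

theorem det_one_sub : (1 - A).det = (∏ i, (1 - hA.eigenvalues i) : ℝ) := by
  rw [← map_one (scalar n), ← eval_charpoly, hA.charpoly_eq, Polynomial.eval_prod]
  simp

theorem l2_opNorm_eq : ‖A‖ = ‖hA.eigenvalues‖ := by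
  conv_lhs => rw [hA.spectral_theorem]
  simp only [Unitary.conjStarAlgAut_apply, ← Unitary.coe_star,
      CStarRing.norm_mul_coe_unitary, CStarRing.norm_coe_unitary_mul, l2_opNorm_diagonal]
  exact ((algebraMap_isometry ℝ 𝕜).postcomp_pi).norm_map_of_map_zero (by ext; simp) _

end IsHermitian

theorem l2_opNorm_lt_one_iff (A : Matrix n n 𝕜) :
    ‖A‖ < 1 ↔ ∀ i, (isHermitian_conjTranspose_mul_self A).eigenvalues i < 1 := by
  have hB := posSemidef_conjTranspose_mul_self A
  rw [← sq_lt_one_iff₀ (norm_nonneg A), sq, ← l2_opNorm_conjTranspose_mul_self,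
    hB.1.l2_opNorm_eq, pi_norm_lt_iff one_pos]
  simp only [Real.norm_eq_abs, abs_of_nonneg (hB.eigenvalues_nonneg _)]

end Matrix

theorem one_sub_mul_one_sub_pos_iff {α : Type*} [Field α] [LinearOrder α] [IsStrictOrderedRing α]
    {a b : α} (hab : a * b ≤ 1) :
    0 < (1 - a) * (1 - b) ↔ a < 1 ∧ b < 1 := by
  refine ⟨fun h ↦ ?_, fun ⟨ha, hb⟩ ↦ mul_pos (sub_pos.mpr ha) (sub_pos.mpr hb)⟩
  by_contra! hge
  by_cases ha : a < 1
  · nlinarith [hge ha]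
  · nlinarith

theorem stmt_0 (A : Matrix (Fin 2) (Fin 2) ℂ)
    (h : ∀ z ∈ spectrum ℂ A, ‖z‖ ≤ 1) :
    opNorm A < 1 ↔ 0 < (1 - Aᴴ * A).det := by
  have hH := isHermitian_conjTranspose_mul_self A
  have hdet : ‖A.det‖ ≤ 1 := by simpa using norm_det_le_pow_of_forall_mem_spectrum h
  have hprod : hH.eigenvalues 0 * hH.eigenvalues 1 ≤ 1 := by
    rw [← Fin.prod_univ_two, prod_eigenvalues_conjTranspose_mul_self]
    exact pow_le_one₀ (norm_nonneg _) hdet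
  rw [opNorm, l2_opNorm_toEuclideanCLM, l2_opNorm_lt_one_iff, Fin.forall_fin_two, hH.det_one_sub,
    RCLike.ofReal_pos, Fin.prod_univ_two, one_sub_mul_one_sub_pos_iff hprod]
end

section
/- Let λ₁, λ₂ be in the open unit disc, s = λ₁+λ₂, p = λ₁λ₂, and β = (s - conj(s)p)/(1-|p|²). Then |1 - ½ s conj(β)/(1 + √(1-|β|²))| = ½|1 - conj(λ₂)λ₁| + ½(1-|λ₁|²)^{1/2}(1-|λ₂|²)^{1/2}. -/
/-!
Put `u = 1 - |λ₁|²`, `v = 1 - |λ₂|²`, `w = 1 - conj λ₂ · λ₁` and `D = 1 - |p|²`.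
The algebraic identity `|s - conj s · p|² = D² - u v |w|²` gives `√(1 - |β|²) = √u √v |w| / D`,
and then `2 D - s · conj (s - conj s · p) = u w + v · conj w` turns the left-hand side into
`|u w + v · conj w + 2 √u √v |w|| / (2 (D + √u √v |w|))`.
Writing `w = |w| e^{iθ}`, that numerator is `|w| (√u e^{iθ/2} + √v e^{-iθ/2})²`, of modulus
`(u + v) |w| + 2 √u √v Re w`; together with `|w|² = 2 Re w - D` and `D = u + v - u v`
the quotient collapses to `(|w| + √u √v) / 2`.
-/

open ComplexConjugate

namespace Complex

section
variable (a b : ℂ)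

theorem norm_sq_one_sub_conj_mul :
    ‖1 - conj b * a‖ ^ 2 = 2 * (1 - conj b * a).re - (1 - ‖a * b‖ ^ 2) := by
  simp only [Complex.sq_norm, normSq_apply, mul_re, mul_im, sub_re, sub_im, one_re, one_im,
    conj_re, conj_im]
  ring

theorem norm_sq_add_sub_conj_add_mul_mul :
    ‖a + b - conj (a + b) * (a * b)‖ ^ 2 =
      (1 - ‖a * b‖ ^ 2) ^ 2 - (1 - ‖a‖ ^ 2) * (1 - ‖b‖ ^ 2) * ‖1 - conj b * a‖ ^ 2 := by
  simp only [Complex.sq_norm, normSq_apply, mul_re, mul_im, add_re, add_im, sub_re, sub_im,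
    one_re, one_im, conj_re, conj_im]
  ring

theorem two_mul_one_sub_norm_sq_sub_mul_conj :
    2 * (1 - (‖a * b‖ : ℂ) ^ 2) - (a + b) * conj (a + b - conj (a + b) * (a * b)) =
      (1 - (‖a‖ : ℂ) ^ 2) * (1 - conj b * a) + (1 - (‖b‖ : ℂ) ^ 2) * conj (1 - conj b * a) := by
  simp only [← mul_conj', map_add, map_sub, map_mul, map_one, conj_conj]
  ring

end

theorem norm_sq_mul_add_sq_mul_conj_add_mul_norm (w : ℂ) (r q : ℝ) :
    ‖(r : ℂ) ^ 2 * w + (q : ℂ) ^ 2 * conj w + (2 * (r * q * ‖w‖) : ℝ)‖ =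
      (r ^ 2 + q ^ 2) * ‖w‖ + 2 * r * q * w.re := by
  set z := (r : ℂ) ^ 2 * w + (q : ℂ) ^ 2 * conj w + (2 * (r * q * ‖w‖) : ℝ)
  have hz_re : z.re = (r ^ 2 + q ^ 2) * w.re + 2 * r * q * ‖w‖ := by
    simp only [z, add_re, mul_re, conj_re, conj_im, ofReal_re, ofReal_im, ← ofReal_pow]
    ring
  have hz_im : z.im = (r ^ 2 - q ^ 2) * w.im := by
    simp only [z, add_im, mul_im, conj_re, conj_im, ofReal_re, ofReal_im, ← ofReal_pow]
    ring
  have hw : ‖w‖ ^ 2 = w.re ^ 2 + w.im ^ 2 := by rw [Complex.sq_norm, normSq_apply]; ring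
  have hnonneg : 0 ≤ (r ^ 2 + q ^ 2) * ‖w‖ + 2 * r * q * w.re := by
    obtain ⟨hre_lower, hre_upper⟩ := abs_le.mp (abs_re_le_norm w)
    nlinarith [sq_nonneg (r - q), sq_nonneg (r + q), norm_nonneg w]
  rw [← abs_of_nonneg hnonneg, ← Real.sqrt_sq_eq_abs, norm_def, normSq_apply, hz_re, hz_im]
  congr 1
  linear_combination (-(r ^ 2 - q ^ 2) ^ 2) * hw

theorem one_sub_norm_mul_sq_pos {a b : ℂ} (ha : ‖a‖ < 1) (hb : ‖b‖ < 1) :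
    0 < 1 - ‖a * b‖ ^ 2 := by
  rw [norm_mul, sub_pos]
  exact pow_lt_one₀ (by positivity) (mul_lt_one_of_nonneg_of_lt_one_left (norm_nonneg a) ha hb.le)
    two_ne_zero

theorem sqrt_one_sub_norm_sq_div {a b : ℂ} (ha : ‖a‖ < 1) (hb : ‖b‖ < 1) :
    √(1 - ‖(a + b - conj (a + b) * (a * b)) / (1 - (‖a * b‖ : ℂ) ^ 2)‖ ^ 2) =
      √(1 - ‖a‖ ^ 2) * √(1 - ‖b‖ ^ 2) * ‖1 - conj b * a‖ / (1 - ‖a * b‖ ^ 2) := by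
  have hD := one_sub_norm_mul_sq_pos ha hb
  have hDC : 1 - (‖a * b‖ : ℂ) ^ 2 = ((1 - ‖a * b‖ ^ 2 : ℝ) : ℂ) := by push_cast; rfl
  rw [← Real.sqrt_sq (by positivity :
    0 ≤ √(1 - ‖a‖ ^ 2) * √(1 - ‖b‖ ^ 2) * ‖1 - conj b * a‖ / (1 - ‖a * b‖ ^ 2))]
  congr 1
  rw [hDC, norm_div, norm_real, Real.norm_of_nonneg hD.le, div_pow, div_pow, mul_pow, mul_pow,
    norm_sq_add_sub_conj_add_mul_mul, Real.sq_sqrt (by nlinarith [norm_nonneg a]),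
    Real.sq_sqrt (by nlinarith [norm_nonneg b])]
  field_simp
  ring

theorem one_sub_mul_conj_div_div (s z : ℂ) {D t : ℝ} (hD : D ≠ 0) (hDt : D + t ≠ 0) :
    1 - s * conj (z / D) / (2 * (1 + ((t / D : ℝ) : ℂ))) =
      (2 * D - s * conj z + (2 * t : ℝ)) / ((2 * (D + t) : ℝ) : ℂ) := by
  have hDC : (D : ℂ) ≠ 0 := ofReal_ne_zero.mpr hD
  have hDtC : (D : ℂ) + t ≠ 0 := by exact_mod_cast hDt
  rw [map_div₀, conj_ofReal]
  push_cast
  field_simp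
  ring

end Complex

open Complex

theorem stmt_4 (l₁ l₂ : ℂ) (h1 : ‖l₁‖ < 1) (h2 : ‖l₂‖ < 1)
    (s p β : ℂ)
    (hs : s = l₁ + l₂) (hp : p = l₁ * l₂)
    (hβ : β = (s - (starRingEnd ℂ) s * p) / (1 - ‖p‖ ^ 2)) :
    ‖1 - s * (starRingEnd ℂ) β / (2 * (1 + (Real.sqrt (1 - ‖β‖ ^ 2) : ℂ)))‖ =
      ‖1 - (starRingEnd ℂ) l₂ * l₁‖ / 2
        + Real.sqrt (1 - ‖l₁‖ ^ 2) * Real.sqrt (1 - ‖l₂‖ ^ 2) / 2 := by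
  subst hs hp hβ
  have hr : √(1 - ‖l₁‖ ^ 2) ^ 2 = 1 - ‖l₁‖ ^ 2 := Real.sq_sqrt (by nlinarith [norm_nonneg l₁])
  have hq : √(1 - ‖l₂‖ ^ 2) ^ 2 = 1 - ‖l₂‖ ^ 2 := Real.sq_sqrt (by nlinarith [norm_nonneg l₂])
  have hrC : 1 - (‖l₁‖ : ℂ) ^ 2 = (√(1 - ‖l₁‖ ^ 2) : ℂ) ^ 2 := by exact_mod_cast hr.symm
  have hqC : 1 - (‖l₂‖ : ℂ) ^ 2 = (√(1 - ‖l₂‖ ^ 2) : ℂ) ^ 2 := by exact_mod_cast hq.symm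
  have hDC : 1 - (‖l₁ * l₂‖ : ℂ) ^ 2 = ((1 - ‖l₁ * l₂‖ ^ 2 : ℝ) : ℂ) := by push_cast; rfl
  have hD := one_sub_norm_mul_sq_pos h1 h2
  have hK : 0 < 1 - ‖l₁ * l₂‖ ^ 2 + √(1 - ‖l₁‖ ^ 2) * √(1 - ‖l₂‖ ^ 2) * ‖1 - conj l₂ * l₁‖ := by
    positivity
  rw [sqrt_one_sub_norm_sq_div h1 h2, hDC, one_sub_mul_conj_div_div _ _ hD.ne' hK.ne', ← hDC,
    two_mul_one_sub_norm_sq_sub_mul_conj, hrC, hqC, norm_div,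
    norm_sq_mul_add_sq_mul_conj_add_mul_norm, norm_real, Real.norm_of_nonneg (by positivity),
    div_eq_iff (by positivity)]
  have hN : ‖l₁ * l₂‖ ^ 2 = ‖l₁‖ ^ 2 * ‖l₂‖ ^ 2 := by rw [norm_mul, mul_pow]
  linear_combination (-√(1 - ‖l₁‖ ^ 2) * √(1 - ‖l₂‖ ^ 2)) * norm_sq_one_sub_conj_mul l₁ l₂
    + ‖1 - conj l₂ * l₁‖ * (1 - √(1 - ‖l₂‖ ^ 2) ^ 2) * hr + ‖1 - conj l₂ * l₁‖ * ‖l₁‖ ^ 2 * hq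
    + ‖1 - conj l₂ * l₁‖ * hN
end

section
/- Define the pentablock 𝒫 = { (a₂₁, tr A, det A) : A a 2×2 complex matrix with operator norm < 1 }, where a₂₁ is the (2,1) entry. If λ₁, λ₂ ∈ ℂ with |λ₁| < 1, |λ₂| < 1, and a ∈ ℂ satisfies |a| < ½|1 - conj(λ₂)λ₁| + ½(1-|λ₁|²)^{1/2}(1-|λ₂|²)^{1/2}, then (a, λ₁+λ₂, λ₁λ₂) ∈ 𝒫. -/
def pentablock : Set (ℂ × ℂ × ℂ) :=
  {x | ∃ A : Matrix (Fin 2) (Fin 2) ℂ, opNorm A < 1 ∧ x = (A 1 0, A.trace, A.det)}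

open scoped Matrix.Norms.L2Operator
open Matrix

lemma opNorm_eq_norm (A : Matrix (Fin 2) (Fin 2) ℂ) : opNorm A = ‖A‖ := rfl

lemma trace_unitary_conj {n R : Type*} [Fintype n] [DecidableEq n] [CommRing R] [StarRing R]
    {U : Matrix n n R} (hU : U ∈ unitary _) (A : Matrix n n R) :
    (U * A * star U).trace = A.trace := by
  rw [trace_mul_cycle, Unitary.star_mul_self_of_mem hU, one_mul]

lemma det_unitary_conj {n R : Type*} [Fintype n] [DecidableEq n] [CommRing R] [StarRing R]
    {U : Matrix n n R} (hU : U ∈ unitary _) (A : Matrix n n R) :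
    (U * A * star U).det = A.det := by
  rw [det_mul, det_mul, mul_right_comm, ← det_mul, Unitary.mul_star_self_of_mem hU, det_one,
    one_mul]

lemma opNorm_unitary_conj {U : Matrix (Fin 2) (Fin 2) ℂ} (hU : U ∈ unitary _)
    (A : Matrix (Fin 2) (Fin 2) ℂ) : opNorm (U * A * star U) = opNorm A := by
  rw [opNorm_eq_norm, opNorm_eq_norm, CStarRing.norm_mul_mem_unitary _ (Unitary.star_mem hU),
    CStarRing.norm_mem_unitary_mul _ hU]

lemma mem_pentablock_of_unitary_conj {U A : Matrix (Fin 2) (Fin 2) ℂ} (hU : U ∈ unitary _)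
    (hA : opNorm A < 1) : ((U * A * star U) 1 0, A.trace, A.det) ∈ pentablock :=
  ⟨U * A * star U, by rwa [opNorm_unitary_conj hU],
    by rw [trace_unitary_conj hU, det_unitary_conj hU]⟩

lemma diagonal_mem_unitary {n R : Type*} [Fintype n] [DecidableEq n] [CommRing R] [StarRing R]
    {v : n → R} (hv : ∀ i, v i ∈ unitary R) : diagonal v ∈ unitary (Matrix n n R) := by
  rw [mem_unitaryGroup_iff, star_eq_conjTranspose, diagonal_conjTranspose, diagonal_mul_diagonal,
    ← diagonal_one]
  exact congrArg diagonal (funext fun i => Unitary.mul_star_self_of_mem (hv i))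

lemma mem_unitary_of_norm_eq_one {e : ℂ} (he : ‖e‖ = 1) : e ∈ unitary ℂ := by
  rw [Unitary.mem_iff_star_mul_self, Complex.star_def, Complex.conj_mul', he]
  norm_num

lemma exists_norm_eq_one_mul_eq {a w : ℂ} (h : ‖a‖ = ‖w‖) : ∃ e : ℂ, ‖e‖ = 1 ∧ a = e * w := by
  rcases eq_or_ne w 0 with rfl | hw
  · exact ⟨1, norm_one, by simpa using h⟩
  · exact ⟨a / w, by rw [norm_div, h, div_self (norm_ne_zero_iff.2 hw)],
      (div_mul_cancel₀ a hw).symm⟩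

lemma mem_pentablock_of_norm_eq {w t d a : ℂ} (hw : (w, t, d) ∈ pentablock) (ha : ‖a‖ = ‖w‖) :
    (a, t, d) ∈ pentablock := by
  obtain ⟨A, hA, hwA⟩ := hw
  obtain ⟨e, he, rfl⟩ := exists_norm_eq_one_mul_eq ha
  simp only [Prod.mk.injEq] at hwA
  obtain ⟨rfl, rfl, rfl⟩ := hwA
  have hU : diagonal ![1, e] ∈ unitary (Matrix (Fin 2) (Fin 2) ℂ) :=
    diagonal_mem_unitary fun i => by fin_cases i; exacts [one_mem _, mem_unitary_of_norm_eq_one he]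
  convert mem_pentablock_of_unitary_conj hU hA using 2
  simp [mul_apply, Fin.sum_univ_two]

lemma star_rotation (c s : ℝ) :
    star !![(c : ℂ), -s; s, c] = !![(c : ℂ), s; -s, c] := by
  ext i j; fin_cases i <;> fin_cases j <;> simp

lemma rotation_mem_unitary {c s : ℝ} (h : c ^ 2 + s ^ 2 = 1) :
    !![(c : ℂ), -s; s, c] ∈ unitary (Matrix (Fin 2) (Fin 2) ℂ) := by
  have hC : (c : ℂ) ^ 2 + (s : ℂ) ^ 2 = 1 := by exact_mod_cast congrArg Complex.ofReal h
  rw [mem_unitaryGroup_iff, star_rotation, mul_fin_two, one_fin_two]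
  ext i j
  fin_cases i <;> fin_cases j <;>
    simp only [mul_neg, neg_mul, neg_neg, Fin.zero_eta, Fin.mk_one, Fin.isValue, of_apply,
      cons_val', cons_val_zero, cons_val_one, cons_val_fin_one]
  · linear_combination hC
  · ring
  · ring
  · linear_combination hC

lemma rotation_conj_upperTriangular_apply_one_zero (c s : ℝ) (l₁ l₂ b : ℂ) :
    (!![(c : ℂ), -s; s, c] * !![l₁, b; 0, l₂] * star !![(c : ℂ), -s; s, c]) 1 0
      = c * s * (l₁ - l₂) - s ^ 2 * b := by
  rw [star_rotation, mul_fin_two, mul_fin_two]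
  simp only [mul_zero, add_zero, neg_mul, mul_neg, Fin.isValue, of_apply, cons_val',
    cons_val_zero, cons_val_fin_one, cons_val_one]
  ring

lemma sq_add_sq_le_of_sq_le_mul {r₁ r₂ β : ℝ} (h₁ : r₁ ^ 2 ≤ 1) (h₂ : r₂ ^ 2 ≤ 1)
    (hβ : β ^ 2 ≤ (1 - r₁ ^ 2) * (1 - r₂ ^ 2)) (p q : ℝ) :
    (r₁ * p + β * q) ^ 2 + (r₂ * q) ^ 2 ≤ p ^ 2 + q ^ 2 := by
  rcases h₁.eq_or_lt with h₁ | h₁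
  · have : β = 0 := by nlinarith [sq_nonneg β]
    subst this; nlinarith
  · have key : (1 - r₁ ^ 2) * (p ^ 2 + q ^ 2 - (r₁ * p + β * q) ^ 2 - (r₂ * q) ^ 2)
        = ((1 - r₁ ^ 2) * p - r₁ * β * q) ^ 2
          + q ^ 2 * ((1 - r₁ ^ 2) * (1 - r₂ ^ 2) - β ^ 2) := by ring
    have : 0 ≤ (1 - r₁ ^ 2) * (p ^ 2 + q ^ 2 - (r₁ * p + β * q) ^ 2 - (r₂ * q) ^ 2) := by
      rw [key]; have := sub_nonneg.2 hβ; positivity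
    nlinarith [nonneg_of_mul_nonneg_right this (sub_pos.2 h₁)]

lemma opNorm_upperTriangular_le_one {l₁ l₂ b : ℂ} (hl₁ : ‖l₁‖ ≤ 1) (hl₂ : ‖l₂‖ ≤ 1)
    (hb : ‖b‖ ^ 2 ≤ (1 - ‖l₁‖ ^ 2) * (1 - ‖l₂‖ ^ 2)) : opNorm !![l₁, b; 0, l₂] ≤ 1 := by
  refine ContinuousLinearMap.opNorm_le_bound _ zero_le_one fun x => ?_
  rw [one_mul, ← pow_le_pow_iff_left₀ (norm_nonneg _) (norm_nonneg _) two_ne_zero,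
    EuclideanSpace.norm_sq_eq, EuclideanSpace.norm_sq_eq]
  simp only [ofLp_toEuclideanCLM, mulVec, dotProduct, of_apply, cons_val', cons_val_fin_one,
    Fin.sum_univ_two, Fin.isValue, cons_val_zero, cons_val_one, zero_mul, zero_add,
    Complex.norm_mul]
  have htri : ‖l₁ * x 0 + b * x 1‖ ≤ ‖l₁‖ * ‖x 0‖ + ‖b‖ * ‖x 1‖ :=
    (norm_add_le _ _).trans_eq (by rw [norm_mul, norm_mul])
  calc ‖l₁ * x 0 + b * x 1‖ ^ 2 + (‖l₂‖ * ‖x 1‖) ^ 2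
      ≤ (‖l₁‖ * ‖x 0‖ + ‖b‖ * ‖x 1‖) ^ 2 + (‖l₂‖ * ‖x 1‖) ^ 2 := by gcongr
    _ ≤ ‖x 0‖ ^ 2 + ‖x 1‖ ^ 2 :=
        sq_add_sq_le_of_sq_le_mul (pow_le_one₀ (norm_nonneg _) hl₁)
          (pow_le_one₀ (norm_nonneg _) hl₂) hb _ _

lemma opNorm_upperTriangular_lt_one {l₁ l₂ b : ℂ} (hl₁ : ‖l₁‖ < 1) (hl₂ : ‖l₂‖ < 1)
    (hb : ‖b‖ ^ 2 < (1 - ‖l₁‖ ^ 2) * (1 - ‖l₂‖ ^ 2)) : opNorm !![l₁, b; 0, l₂] < 1 := by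
  -- the non-strict bound survives scaling the matrix by some `r > 1`
  have h₁ : ∀ᶠ r : ℝ in nhds 1, ‖(r : ℂ) * l₁‖ < 1 :=
    ContinuousAt.eventually_lt (by fun_prop) continuousAt_const (by simpa)
  have h₂ : ∀ᶠ r : ℝ in nhds 1, ‖(r : ℂ) * l₂‖ < 1 :=
    ContinuousAt.eventually_lt (by fun_prop) continuousAt_const (by simpa)
  have h₃ : ∀ᶠ r : ℝ in nhds 1,
      ‖(r : ℂ) * b‖ ^ 2 < (1 - ‖(r : ℂ) * l₁‖ ^ 2) * (1 - ‖(r : ℂ) * l₂‖ ^ 2) :=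
    ContinuousAt.eventually_lt (by fun_prop) (by fun_prop) (by simpa)
  obtain ⟨r, hr, hl₁r, hl₂r, hbr⟩ := (h₁.and (h₂.and h₃)).exists_gt
  have hscaled : !![(r : ℂ) * l₁, r * b; 0, r * l₂] = (r : ℂ) • !![l₁, b; 0, l₂] := by
    ext i j; fin_cases i <;> fin_cases j <;> simp
  have hle := opNorm_upperTriangular_le_one hl₁r.le hl₂r.le hbr.le
  rw [hscaled, opNorm_eq_norm, norm_smul, Complex.norm_real, Real.norm_of_nonneg (by linarith)]
    at hle
  rw [opNorm_eq_norm]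
  nlinarith [norm_nonneg !![l₁, b; 0, l₂]]

lemma exists_cos_sin_mul_add_mul_sin_sq_eq {D β M : ℝ} (hβ : 0 < β) (hM : 0 ≤ M)
    (h : 2 * M < √(D ^ 2 + β ^ 2) + β) :
    ∃ c s x : ℝ, c ^ 2 + s ^ 2 = 1 ∧ 0 ≤ x ∧ x < β ∧ c * s * D + x * s ^ 2 = M := by
  rcases hM.eq_or_lt with rfl | hM
  · exact ⟨1, 0, 0, by norm_num, le_rfl, hβ, by ring⟩
  have hβN : β ≤ √(D ^ 2 + β ^ 2) := Real.le_sqrt_of_sq_le (by nlinarith)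
  have hMβ : 4 * M ^ 2 - 4 * M * β < D ^ 2 := by
    have : (2 * M - β) ^ 2 < √(D ^ 2 + β ^ 2) ^ 2 := sq_lt_sq' (by linarith) (by linarith)
    rw [Real.sq_sqrt (by positivity)] at this
    linarith
  set x := max 0 (M - D ^ 2 / (4 * M)) with hx
  have hxβ : x < β := by
    refine max_lt hβ ?_
    rw [sub_lt_comm, lt_div_iff₀ (by positivity)]
    nlinarith
  have hΔ : 0 ≤ D ^ 2 - 4 * M * (M - x) := by
    have : 4 * M * (M - x) ≤ 4 * M * (D ^ 2 / (4 * M)) := by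
      gcongr; linarith [le_max_right 0 (M - D ^ 2 / (4 * M))]
    rw [mul_div_cancel₀ _ (by positivity)] at this
    linarith
  -- `(p, q) = (D + t, 2 M)` solves `M p² - D p q + (M - x) q² = 0`, which is the equation
  -- `c s D + x s² = M` for `(c, s) = (p, q) / √(p² + q²)`
  obtain ⟨t, ht⟩ : ∃ t, t ^ 2 = D ^ 2 - 4 * M * (M - x) := ⟨_, Real.sq_sqrt hΔ⟩
  obtain ⟨r, hr, hr2⟩ : ∃ r, 0 < r ∧ r ^ 2 = (D + t) ^ 2 + (2 * M) ^ 2 :=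
    ⟨_, Real.sqrt_pos.2 (by positivity), Real.sq_sqrt (by positivity)⟩
  refine ⟨(D + t) / r, 2 * M / r, x, ?_, le_max_left _ _, hxβ, ?_⟩
  · field_simp
    linear_combination -hr2
  · field_simp
    linear_combination -ht - hr2

lemma mem_pentablock_of_upperTriangular {l₁ l₂ b : ℂ} (hl₁ : ‖l₁‖ < 1) (hl₂ : ‖l₂‖ < 1)
    (hb : ‖b‖ ^ 2 < (1 - ‖l₁‖ ^ 2) * (1 - ‖l₂‖ ^ 2)) {c s : ℝ} (hcs : c ^ 2 + s ^ 2 = 1) :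
    (c * s * (l₁ - l₂) - s ^ 2 * b, l₁ + l₂, l₁ * l₂) ∈ pentablock := by
  have h := mem_pentablock_of_unitary_conj (rotation_mem_unitary hcs)
    (opNorm_upperTriangular_lt_one hl₁ hl₂ hb)
  rwa [rotation_conj_upperTriangular_apply_one_zero, trace_fin_two_of, det_fin_two_of,
    mul_zero, sub_zero] at h

lemma norm_one_sub_conj_mul_sq (l₁ l₂ : ℂ) :
    ‖1 - starRingEnd ℂ l₂ * l₁‖ ^ 2 = ‖l₁ - l₂‖ ^ 2 + (1 - ‖l₁‖ ^ 2) * (1 - ‖l₂‖ ^ 2) := by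
  simp only [Complex.sq_norm, Complex.normSq_apply, Complex.sub_re, Complex.sub_im,
    Complex.one_re, Complex.one_im, Complex.mul_re, Complex.mul_im, Complex.conj_re,
    Complex.conj_im]
  ring

theorem stmt_6 (l₁ l₂ a : ℂ) (h1 : ‖l₁‖ < 1) (h2 : ‖l₂‖ < 1)
    (ha : ‖a‖ < ‖1 - (starRingEnd ℂ) l₂ * l₁‖ / 2
        + Real.sqrt (1 - ‖l₁‖ ^ 2) * Real.sqrt (1 - ‖l₂‖ ^ 2) / 2) :
    (a, l₁ + l₂, l₁ * l₂) ∈ pentablock := by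
  set β := √(1 - ‖l₁‖ ^ 2) * √(1 - ‖l₂‖ ^ 2)
  have hr₁ : 0 < 1 - ‖l₁‖ ^ 2 := sub_pos.2 (pow_lt_one₀ (norm_nonneg _) h1 two_ne_zero)
  have hr₂ : 0 < 1 - ‖l₂‖ ^ 2 := sub_pos.2 (pow_lt_one₀ (norm_nonneg _) h2 two_ne_zero)
  have hβ : 0 < β := mul_pos (Real.sqrt_pos.2 hr₁) (Real.sqrt_pos.2 hr₂)
  have hβ2 : β ^ 2 = (1 - ‖l₁‖ ^ 2) * (1 - ‖l₂‖ ^ 2) := by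
    rw [mul_pow, Real.sq_sqrt hr₁.le, Real.sq_sqrt hr₂.le]
  have hN : ‖1 - starRingEnd ℂ l₂ * l₁‖ = √(‖l₁ - l₂‖ ^ 2 + β ^ 2) := by
    rw [hβ2, ← norm_one_sub_conj_mul_sq, Real.sqrt_sq (norm_nonneg _)]
  obtain ⟨c, s, x, hcs, hx0, hxβ, hM⟩ :=
    exists_cos_sin_mul_add_mul_sin_sq_eq hβ (norm_nonneg a) (by linarith)
  obtain ⟨u, hu, hlu⟩ : ∃ u : ℂ, ‖u‖ = 1 ∧ l₁ - l₂ = ‖l₁ - l₂‖ * u :=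
    ⟨_, Complex.norm_exp_ofReal_mul_I _, (Complex.norm_mul_exp_arg_mul_I _).symm⟩
  have hb : ‖-(x * u)‖ ^ 2 < (1 - ‖l₁‖ ^ 2) * (1 - ‖l₂‖ ^ 2) := by
    rw [norm_neg, norm_mul, hu, mul_one, Complex.norm_real,
      Real.norm_of_nonneg hx0, ← hβ2]
    exact pow_lt_pow_left₀ hxβ hx0 two_ne_zero
  refine mem_pentablock_of_norm_eq (mem_pentablock_of_upperTriangular h1 h2 hb hcs) ?_
  have hw : c * s * (l₁ - l₂) - s ^ 2 * -(x * u) = u * (c * s * ‖l₁ - l₂‖ + x * s ^ 2 : ℝ) := by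
    conv_lhs => rw [hlu]
    push_cast
    ring
  rw [hw, norm_mul, hu, one_mul, hM, Complex.norm_real,
    Real.norm_of_nonneg (norm_nonneg a)]
end

section
/- A matrix X = [[z, w],[0, z]] (z, w ∈ ℂ) has operator norm at most 1 if and only if |w| ≤ 1 - |z|². -/
open ComplexConjugate

lemma norm_sq_toEuclideanCLM_upperTriangular (z w : ℂ) (x : EuclideanSpace ℂ (Fin 2)) :
    ‖Matrix.toEuclideanCLM (𝕜 := ℂ) !![z, w; 0, z] x‖ ^ 2 =
      ‖z * x 0 + w * x 1‖ ^ 2 + ‖z * x 1‖ ^ 2 := by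
  simp [EuclideanSpace.norm_sq_eq, Fin.sum_univ_two, Matrix.mulVec, dotProduct]

lemma opNorm_upperTriangular_le_one_iff (z w : ℂ) :
    opNorm !![z, w; 0, z] ≤ 1 ↔
      ∀ x₁ x₂ : ℂ, ‖z * x₁ + w * x₂‖ ^ 2 + ‖z * x₂‖ ^ 2 ≤ ‖x₁‖ ^ 2 + ‖x₂‖ ^ 2 := by
  have hsq (x : EuclideanSpace ℂ (Fin 2)) : ‖x‖ ^ 2 = ‖x 0‖ ^ 2 + ‖x 1‖ ^ 2 := by
    simp [EuclideanSpace.norm_sq_eq, Fin.sum_univ_two]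
  simp only [opNorm, ContinuousLinearMap.opNorm_le_iff zero_le_one, one_mul]
  refine ⟨fun h x₁ x₂ => ?_, fun h x => ?_⟩
  · have hx := pow_le_pow_left₀ (norm_nonneg _) (h !₂[x₁, x₂]) 2
    rwa [norm_sq_toEuclideanCLM_upperTriangular, hsq] at hx
  · refine (pow_le_pow_iff_left₀ (norm_nonneg _) (norm_nonneg _) two_ne_zero).1 ?_
    rw [norm_sq_toEuclideanCLM_upperTriangular, hsq]
    exact h (x 0) (x 1)

lemma sq_add_sq_le_of_le_one_sub_sq {a b s t : ℝ} (ha : 0 ≤ a) (hb : 0 ≤ b)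
    (hab : b ≤ 1 - a ^ 2) (hs : 0 ≤ s) (ht : 0 ≤ t) :
    (a * s + b * t) ^ 2 + (a * t) ^ 2 ≤ s ^ 2 + t ^ 2 := by
  have hbt : a * s + b * t ≤ a * s + (1 - a ^ 2) * t := by gcongr
  have hextremal : s ^ 2 + t ^ 2 - (a * s + (1 - a ^ 2) * t) ^ 2 - (a * t) ^ 2 =
      (1 - a ^ 2) * (s - a * t) ^ 2 := by ring
  have hdefect : 0 ≤ (1 - a ^ 2) * (s - a * t) ^ 2 := mul_nonneg (by linarith) (sq_nonneg _)
  nlinarith [pow_le_pow_left₀ (by positivity) hbt 2]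

lemma forall_norm_sq_le_of_le_one_sub_sq {z w : ℂ} (h : ‖w‖ ≤ 1 - ‖z‖ ^ 2) (x₁ x₂ : ℂ) :
    ‖z * x₁ + w * x₂‖ ^ 2 + ‖z * x₂‖ ^ 2 ≤ ‖x₁‖ ^ 2 + ‖x₂‖ ^ 2 := by
  have htri : ‖z * x₁ + w * x₂‖ ≤ ‖z‖ * ‖x₁‖ + ‖w‖ * ‖x₂‖ :=
    (norm_add_le _ _).trans_eq (by rw [norm_mul, norm_mul])
  calc ‖z * x₁ + w * x₂‖ ^ 2 + ‖z * x₂‖ ^ 2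
      ≤ (‖z‖ * ‖x₁‖ + ‖w‖ * ‖x₂‖) ^ 2 + (‖z‖ * ‖x₂‖) ^ 2 := by
        rw [norm_mul]; gcongr
    _ ≤ ‖x₁‖ ^ 2 + ‖x₂‖ ^ 2 :=
        sq_add_sq_le_of_le_one_sub_sq (norm_nonneg _) (norm_nonneg _) h
          (norm_nonneg _) (norm_nonneg _)

lemma le_one_sub_sq_of_forall_norm_sq_le {z w : ℂ}
    (h : ∀ x₁ x₂ : ℂ, ‖z * x₁ + w * x₂‖ ^ 2 + ‖z * x₂‖ ^ 2 ≤ ‖x₁‖ ^ 2 + ‖x₂‖ ^ 2) :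
    ‖w‖ ≤ 1 - ‖z‖ ^ 2 := by
  have hz : ‖z‖ ^ 2 ≤ 1 := by simpa using h 1 0
  rcases (norm_nonneg w).eq_or_lt with hw | hw
  · linarith
  have hw' := h (conj z * w) ‖w‖
  have haligned : z * (conj z * w) + w * ‖w‖ = ((‖z‖ ^ 2 + ‖w‖ : ℝ) : ℂ) * w := by
    rw [← mul_assoc, Complex.mul_conj']; push_cast; ring
  rw [haligned] at hw'
  simp only [norm_mul, Complex.norm_conj, Complex.norm_real, Real.norm_eq_abs,
    abs_of_nonneg (norm_nonneg w), abs_of_nonneg (by positivity : 0 ≤ ‖z‖ ^ 2 + ‖w‖)] at hw'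
  have hsum : (‖z‖ ^ 2 + ‖w‖) ^ 2 ≤ 1 := by nlinarith [mul_pos hw hw]
  nlinarith

theorem stmt_11 (z w : ℂ) :
    opNorm !![z, w; 0, z] ≤ 1 ↔ ‖w‖ ≤ 1 - ‖z‖ ^ 2 := by
  rw [opNorm_upperTriangular_le_one_iff]
  exact ⟨le_one_sub_sq_of_forall_norm_sq_le, forall_norm_sq_le_of_le_one_sub_sq⟩
end

section
/- Neither the pentablock 𝒫 nor its closure is a convex subset of ℂ³; specifically, (0,2,1) and (0,2i,-1) lie in the closure of 𝒫 but their midpoint (0,1+i,0) does not. -/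
/-! Every point `(a, λ₁ + λ₂, λ₁λ₂)` of the pentablock has `|λᵢ| ≤ 1`, which forces
`|λ₁ + λ₂| ≤ 1 + |λ₁λ₂|`; this closed condition fails at `(0, 1 + i, 0)`. The scalar matrices
`z • 1` with `|z| < 1` show that `(0, 2z, z²)` lies in the closure for `|z| ≤ 1`, in particular
for `z = 1` and `z = i`, and `(0, 1 + i, 0)` is the midpoint of these two points. -/

lemma norm_add_le_one_add_norm_mul {𝕜 : Type*} [NormedDivisionRing 𝕜] {a b : 𝕜}
    (ha : ‖a‖ ≤ 1) (hb : ‖b‖ ≤ 1) : ‖a + b‖ ≤ 1 + ‖a * b‖ := by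
  rw [norm_mul]
  nlinarith [norm_add_le a b, mul_nonneg (sub_nonneg.2 ha) (sub_nonneg.2 hb)]

lemma norm_le_opNorm_of_isRoot_charpoly {A : Matrix (Fin 2) (Fin 2) ℂ} {μ : ℂ}
    (h : A.charpoly.IsRoot μ) : ‖μ‖ ≤ opNorm A := by
  have hμ := Matrix.mem_spectrum_of_isRoot_charpoly h
  rw [← AlgEquiv.spectrum_eq (Matrix.toEuclideanCLM (𝕜 := ℂ) (n := Fin 2)) A] at hμ
  exact spectrum.norm_le_norm_of_mem hμ

lemma norm_trace_le_one_add_norm_det {A : Matrix (Fin 2) (Fin 2) ℂ} (hA : opNorm A ≤ 1) :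
    ‖A.trace‖ ≤ 1 + ‖A.det‖ := by
  have hcard : A.charpoly.roots.card = 2 := by
    rw [Polynomial.splits_iff_card_roots.mp (IsAlgClosed.splits A.charpoly),
      Matrix.charpoly_natDegree_eq_dim, Fintype.card_fin]
  obtain ⟨a, b, hab⟩ := Multiset.card_eq_two.mp hcard
  have hroot : ∀ μ ∈ A.charpoly.roots, ‖μ‖ ≤ 1 := fun μ hμ =>
    (norm_le_opNorm_of_isRoot_charpoly (Polynomial.isRoot_of_mem_roots hμ)).trans hA
  have htr : A.trace = a + b := by rw [Matrix.trace_eq_sum_roots_charpoly, hab]; simp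
  have hdet : A.det = a * b := by rw [Matrix.det_eq_prod_roots_charpoly, hab]; simp
  rw [htr, hdet]
  exact norm_add_le_one_add_norm_mul (hroot a (by simp [hab])) (hroot b (by simp [hab]))

lemma closure_pentablock_subset :
    closure pentablock ⊆ {x : ℂ × ℂ × ℂ | ‖x.2.1‖ ≤ 1 + ‖x.2.2‖} := by
  refine closure_minimal ?_ (isClosed_le (by fun_prop) (by fun_prop))
  rintro _ ⟨A, hA, rfl⟩
  exact norm_trace_le_one_add_norm_det hA.le

lemma scalar_mem_pentablock {z : ℂ} (hz : ‖z‖ < 1) :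
    ((0 : ℂ), 2 * z, z ^ 2) ∈ pentablock := by
  refine ⟨z • 1, ?_, ?_⟩
  · rwa [opNorm, map_smul, map_one, norm_smul, norm_one, mul_one]
  · simp [Matrix.trace_smul, mul_comm z 2]

lemma scalar_mem_closure_pentablock {z : ℂ} (hz : ‖z‖ ≤ 1) :
    ((0 : ℂ), 2 * z, z ^ 2) ∈ closure pentablock := by
  have hz' : z ∈ closure (Metric.ball 0 1) := by
    rwa [closure_ball 0 one_ne_zero, mem_closedBall_zero_iff]
  refine closure_mono ?_ (image_closure_subset_closure_image
    (f := fun w : ℂ => ((0 : ℂ), 2 * w, w ^ 2)) (by fun_prop) ⟨z, hz', rfl⟩)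
  rintro _ ⟨w, hw, rfl⟩
  exact scalar_mem_pentablock (mem_ball_zero_iff.mp hw)

theorem stmt_12 :
    ¬ Convex ℝ pentablock ∧ ¬ Convex ℝ (closure pentablock) ∧
      ((0 : ℂ), (2 : ℂ), (1 : ℂ)) ∈ closure pentablock ∧
      ((0 : ℂ), 2 * Complex.I, (-1 : ℂ)) ∈ closure pentablock ∧
      ((0 : ℂ), 1 + Complex.I, (0 : ℂ)) ∉ closure pentablock := by
  have hone : ((0 : ℂ), (2 : ℂ), (1 : ℂ)) ∈ closure pentablock := by
    simpa using scalar_mem_closure_pentablock (z := 1) (by simp)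
  have hI : ((0 : ℂ), 2 * Complex.I, (-1 : ℂ)) ∈ closure pentablock := by
    simpa using scalar_mem_closure_pentablock (z := Complex.I) (by simp)
  have hmid : ((0 : ℂ), 1 + Complex.I, (0 : ℂ)) ∉ closure pentablock := fun h => by
    have h := closure_pentablock_subset h
    have hnorm : ‖1 + Complex.I‖ = √2 := by
      rw [Complex.norm_def, Complex.normSq_apply]; norm_num
    simp only [Set.mem_ofPred_eq, norm_zero, add_zero, hnorm] at h
    exact Real.one_lt_sqrt_two.not_ge h
  have hconv : ¬ Convex ℝ (closure pentablock) := fun hc => by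
    refine hmid ?_
    convert hc hone hI (a := 1 / 2) (b := 1 / 2) (by norm_num) (by norm_num) (by norm_num) using 1
    ext <;> simp
  exact ⟨fun h => hconv h.closure, hconv, hone, hI, hmid⟩
end

section
/- The real pentablock 𝒫 ∩ ℝ³ is convex, where 𝒫 ∩ ℝ³ = {(a,s,p) ∈ ℝ³ : |p| < 1, |s| < 1+p, |a| < 1 - ½(1 + p - √((1+p)² - s²))}. -/
/-!
The set is `{(a, y) | y ∈ T, |a| < K y}` over the open triangle `T = {|p| < 1, |s| < 1 + p}`, and
such a "norm-hypograph" of a concave function over a convex base is convex. `K` is concave on `T`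
because `√((1 + p)² - s²)` is the geometric mean of the affine functions `1 + p - s` and
`1 + p + s`, and `(x, y) ↦ √(x y)` is concave on the closed quadrant by AM-GM.
-/

open Set

theorem ConcaveOn.convex_setOf_norm_lt {F E : Type*} [SeminormedAddCommGroup F] [NormedSpace ℝ F]
    [AddCommGroup E] [Module ℝ E] {s : Set E} {g : E → ℝ} (hg : ConcaveOn ℝ s g) :
    Convex ℝ {x : F × E | x.2 ∈ s ∧ ‖x.1‖ < g x.2} := by
  have hf : ConvexOn ℝ (Prod.snd ⁻¹' s) fun x : F × E => ‖x.1‖ - g x.2 :=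
    (((convexOn_norm convex_univ).comp_linearMap (LinearMap.fst ℝ F E)).subset (subset_univ _)
      (hg.1.linear_preimage (LinearMap.snd ℝ F E))).sub (hg.comp_linearMap (LinearMap.snd ℝ F E))
  have := hf.convex_lt 0
  simp only [sub_neg] at this
  exact this

theorem concaveOn_sqrt_mul : ConcaveOn ℝ (Ici 0 ×ˢ Ici 0) fun z : ℝ × ℝ => √(z.1 * z.2) := by
  refine ⟨(convex_Ici 0).prod (convex_Ici 0), ?_⟩
  rintro ⟨a, b⟩ ⟨ha, hb⟩ ⟨c, d⟩ ⟨hc, hd⟩ t u ht hu -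
  simp only [mem_Ici] at ha hb hc hd
  simp only [smul_eq_mul, Prod.smul_mk, Prod.mk_add_mk]
  rw [Real.le_sqrt (by positivity) (by positivity)]
  have hamgm : 2 * (√(a * b) * √(c * d)) ≤ a * d + b * c := by
    have hswap : √(a * b) * √(c * d) = √(a * d) * √(b * c) := by
      rw [← Real.sqrt_mul (mul_nonneg ha hb), ← Real.sqrt_mul (mul_nonneg ha hd)]
      ring_nf
    have h := two_mul_le_add_sq √(a * d) √(b * c)
    rw [Real.sq_sqrt (mul_nonneg ha hd), Real.sq_sqrt (mul_nonneg hb hc)] at h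
    linarith
  calc (t * √(a * b) + u * √(c * d)) ^ 2
      = t ^ 2 * √(a * b) ^ 2 + t * u * (2 * (√(a * b) * √(c * d))) + u ^ 2 * √(c * d) ^ 2 := by
        ring
    _ ≤ t ^ 2 * (a * b) + t * u * (a * d + b * c) + u ^ 2 * (c * d) := by
        rw [Real.sq_sqrt (mul_nonneg ha hb), Real.sq_sqrt (mul_nonneg hc hd)]
        gcongr
    _ = (t * a + u * c) * (t * b + u * d) := by ring

theorem concaveOn_sqrt_sq_sub_sq :
    ConcaveOn ℝ {y : ℝ × ℝ | |y.1| ≤ y.2} fun y => √(y.2 ^ 2 - y.1 ^ 2) := by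
  let L : ℝ × ℝ →ₗ[ℝ] ℝ × ℝ :=
    (LinearMap.snd ℝ ℝ ℝ - LinearMap.fst ℝ ℝ ℝ).prod (LinearMap.snd ℝ ℝ ℝ + LinearMap.fst ℝ ℝ ℝ)
  have hL (y : ℝ × ℝ) : L y = (y.2 - y.1, y.2 + y.1) := by simp [L]
  have hset : L ⁻¹' (Ici 0 ×ˢ Ici 0) = {y | |y.1| ≤ y.2} := by
    ext y
    simp only [mem_preimage, hL, mem_prod, mem_Ici, sub_nonneg, mem_ofPred_eq, abs_le]
    constructor <;> rintro ⟨h₁, h₂⟩ <;> constructor <;> linarith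
  have hfun : ((fun z : ℝ × ℝ => √(z.1 * z.2)) ∘ L) = fun y => √(y.2 ^ 2 - y.1 ^ 2) := by
    funext y
    simp only [Function.comp_apply, hL]
    ring_nf
  simpa only [hset, hfun] using concaveOn_sqrt_mul.comp_linearMap L

def pentablockBase : Set (ℝ × ℝ) := {y | |y.2| < 1 ∧ |y.1| < 1 + y.2}

noncomputable def pentablockHeight (y : ℝ × ℝ) : ℝ :=
  1 - (1 + y.2 - √((1 + y.2) ^ 2 - y.1 ^ 2)) / 2

theorem convex_pentablockBase : Convex ℝ pentablockBase := by
  refine convex_iff_forall_pos.2 ?_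
  rintro ⟨s₁, p₁⟩ h₁ ⟨s₂, p₂⟩ h₂ t u ht hu htu
  simp only [pentablockBase, mem_ofPred_eq, abs_lt, Prod.smul_mk, Prod.mk_add_mk,
    smul_eq_mul] at h₁ h₂ ⊢
  obtain ⟨⟨hp₁, hp₁'⟩, hs₁, hs₁'⟩ := h₁
  obtain ⟨⟨hp₂, hp₂'⟩, hs₂, hs₂'⟩ := h₂
  refine ⟨⟨?_, ?_⟩, ?_, ?_⟩ <;> nlinarith

theorem concaveOn_pentablockHeight : ConcaveOn ℝ pentablockBase pentablockHeight := by
  refine ⟨convex_pentablockBase, ?_⟩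
  rintro ⟨s₁, p₁⟩ ⟨-, hs₁⟩ ⟨s₂, p₂⟩ ⟨-, hs₂⟩ t u ht hu htu
  have key := concaveOn_sqrt_sq_sub_sq.2 (x := (s₁, 1 + p₁)) (y := (s₂, 1 + p₂)) hs₁.le hs₂.le
    ht hu htu
  have hshift : t * (1 + p₁) + u * (1 + p₂) = 1 + (t * p₁ + u * p₂) := by
    linear_combination htu
  simp only [Prod.smul_mk, Prod.mk_add_mk, smul_eq_mul, hshift] at key
  simp only [pentablockHeight, Prod.smul_mk, Prod.mk_add_mk, smul_eq_mul]
  linarith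

theorem stmt_16 :
    Convex ℝ {x : ℝ × ℝ × ℝ | |x.2.2| < 1 ∧ |x.2.1| < 1 + x.2.2 ∧
      |x.1| < 1 - (1 + x.2.2 - Real.sqrt ((1 + x.2.2) ^ 2 - x.2.1 ^ 2)) / 2} := by
  convert concaveOn_pentablockHeight.convex_setOf_norm_lt (F := ℝ) using 1
  ext x
  simp only [pentablockBase, pentablockHeight, mem_ofPred_eq, Real.norm_eq_abs, and_assoc]
end

section
/- The map h : 𝔻 → ℂ³, h(λ) = (λ², 0, λ), admits no holomorphic lifting H : 𝔻 → ℂ^{2×2} with H₂₁(λ) = λ², tr H(λ) = 0, det H(λ) = λ for all λ ∈ 𝔻. -/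
/-! Writing a traceless lifting as `H = [[η, g], [λ², -η]]`, the determinant condition reads
`η² = -λ - λ² g`. The left side is a square vanishing at `0` (since `η(0)² = 0`), so its
derivative at `0` is `0`, while the right side has derivative `-1` there. -/

open Filter Topology

theorem Matrix.det_fin_two_of_trace_eq_zero {R : Type*} [CommRing R]
    {A : Matrix (Fin 2) (Fin 2) R} (hA : A.trace = 0) :
    A.det = -(A 0 0 * A 0 0) - A 0 1 * A 1 0 := by
  rw [Matrix.trace_fin_two] at hA
  rw [Matrix.det_fin_two, eq_neg_of_add_eq_zero_right hA]
  ring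

section Derivatives

variable {𝕜 : Type*} [NontriviallyNormedField 𝕜] {f g : 𝕜 → 𝕜} {f' g' a : 𝕜}

theorem HasDerivAt.mul_of_eq_zero (hf : HasDerivAt f f' a) (hg : HasDerivAt g g' a)
    (hfa : f a = 0) (hga : g a = 0) : HasDerivAt (fun x => f x * g x) 0 a :=
  (hf.mul hg).congr_deriv (by simp [hfa, hga])

theorem not_mul_self_eventuallyEq_neg_sub_sq_mul {η g : 𝕜 → 𝕜}
    (hη : DifferentiableAt 𝕜 η 0) (hg : DifferentiableAt 𝕜 g 0) :
    ¬ (fun z => η z * η z) =ᶠ[𝓝 0] fun z => -z - z ^ 2 * g z := by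
  intro h
  have hη0 : η 0 = 0 := mul_self_eq_zero.mp (by simpa using h.eq_of_nhds)
  have hsquare : HasDerivAt (fun z => η z * η z) 0 0 :=
    hη.hasDerivAt.mul_of_eq_zero hη.hasDerivAt hη0 hη0
  have hrhs : HasDerivAt (fun z => -z - z ^ 2 * g z) (-1) 0 :=
    ((hasDerivAt_id 0).neg.sub ((hasDerivAt_pow 2 0).mul hg.hasDerivAt)).congr_deriv (by simp)
  exact one_ne_zero (neg_eq_zero.mp ((hsquare.congr_of_eventuallyEq h.symm).unique hrhs).symm)

end Derivatives

theorem stmt_18 :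
    ¬ ∃ H : ℂ → Matrix (Fin 2) (Fin 2) ℂ,
        (∀ i j, DifferentiableOn ℂ (fun l => H l i j) (Metric.ball (0 : ℂ) 1)) ∧
        ∀ l ∈ Metric.ball (0 : ℂ) 1,
          H l 1 0 = l ^ 2 ∧ (H l).trace = 0 ∧ (H l).det = l := by
  rintro ⟨H, hdiff, hcond⟩
  have hball : Metric.ball (0 : ℂ) 1 ∈ 𝓝 0 := Metric.ball_mem_nhds 0 one_pos
  refine not_mul_self_eventuallyEq_neg_sub_sq_mul ((hdiff 0 0).differentiableAt hball)
    ((hdiff 0 1).differentiableAt hball) (eventually_of_mem hball fun l hl => ?_)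
  obtain ⟨h10, htr, hdet⟩ := hcond l hl
  have := Matrix.det_fin_two_of_trace_eq_zero htr
  rw [hdet, h10] at this
  linear_combination this
end
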